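/- arXiv:2311.01791 — 2 statements merged into one kernel-verified Lean document; each statement's English description precedes it below -/
import Mathlib

section
/- For every integer n ≥ 2 and every f ∈ R_n, there exist g ∈ R_n and an integer m ≥ 0 such that D_n(g) = x_{n,0}^m · f. (Equivalently, the canonical extension D'_n of D_n to the localization R'_n = R_n[x_{n,0}^{−1}] is surjective, i.e. Coker(D'_n) = 0.) -/
open MvPolynomial

noncomputable section

/-- `R n` is the polynomial ring `ℚ[x_{n,0}, …, x_{n,n}]`. -/
abbrev R (n : ℕ) : Type := MvPolynomial (Fin (n + 1)) ℚ

/-- The variable `x_{n,k}` of `R n` (and `0` for out-of-range indices, which never occur below). -/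
def x (n k : ℕ) : R n := if h : k < n + 1 then X ⟨k, h⟩ else 0

/-- The derivation `D_n = Σ_{k=0}^{n-1} x_{n,k} ∂/∂x_{n,k+1}`, i.e. the unique `ℚ`-linear
derivation with `D_n(x_{n,k}) = x_{n,k-1}` for `1 ≤ k ≤ n` and `D_n(x_{n,0}) = 0`. -/
def D (n : ℕ) : Derivation ℚ (R n) (R n) :=
  MvPolynomial.mkDerivation ℚ fun j : Fin (n + 1) =>
    if (j : ℕ) = 0 then 0 else x n ((j : ℕ) - 1)

/-- `x̄_{n,2ℓ} := x_{n,ℓ}² + 2 Σ_{i=0}^{ℓ−1} (−1)^{ℓ+i} x_{n,i} x_{n,2ℓ−i}`. -/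
def xbarE (n l : ℕ) : R n :=
  x n l ^ 2 + 2 * ∑ i ∈ Finset.range l, (-1 : R n) ^ (l + i) * x n i * x n (2 * l - i)

/-- `x̂_{n,2ℓ+1} := x_{n,ℓ}x_{n,ℓ+1} + Σ_{i=0}^{ℓ−1} (−1)^{ℓ+i}(2ℓ−2i+1) x_{n,i} x_{n,2ℓ+1−i}`. -/
def xhatO (n l : ℕ) : R n :=
  x n l * x n (l + 1) +
    ∑ i ∈ Finset.range l,
      (-1 : R n) ^ (l + i) * ((2 * l - 2 * i + 1 : ℕ) : R n) * x n i * x n (2 * l + 1 - i)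

/-- `x̄_{n,2ℓ+1} := x_{n,1}·x̄_{n,2ℓ} − x_{n,0}·x̂_{n,2ℓ+1}`. -/
def xbarO (n l : ℕ) : R n := x n 1 * xbarE n l - x n 0 * xhatO n l

/-- `x̄_{n,k}` for `k ≥ 2` (even or odd case). -/
def xbar (n k : ℕ) : R n := if k % 2 = 0 then xbarE n (k / 2) else xbarO n (k / 2)


-- auxiliary lemmas

lemma D_X (n : ℕ) (j : Fin (n + 1)) :
    D n (X j) = if (j : ℕ) = 0 then 0 else x n ((j : ℕ) - 1) := by
  simp [D, mkDerivation_X]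

lemma x0_eq (n : ℕ) : x n 0 = X (⟨0, Nat.succ_pos n⟩ : Fin (n + 1)) := by
  simp [x]

lemma D_x0 (n : ℕ) : D n (x n 0) = 0 := by
  rw [x0_eq, D_X]; simp

lemma x1_eq (n : ℕ) (hn : 1 ≤ n) : x n 1 = X (⟨1, by omega⟩ : Fin (n + 1)) := by
  have h1 : (1 : ℕ) < n + 1 := by omega
  rw [x, dif_pos h1]

lemma D_x1 (n : ℕ) (hn : 1 ≤ n) : D n (x n 1) = x n 0 := by
  rw [x1_eq n hn, D_X]; simp

lemma iterD_zero (n k : ℕ) : (⇑(D n))^[k] (0 : R n) = 0 := by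
  induction k with
  | zero => rfl
  | succ k ih => rw [Function.iterate_succ_apply', ih, map_zero]

lemma iterD_add (n k : ℕ) (u v : R n) :
    (⇑(D n))^[k] (u + v) = (⇑(D n))^[k] u + (⇑(D n))^[k] v := by
  induction k generalizing u v with
  | zero => rfl
  | succ k ih => rw [Function.iterate_succ_apply', Function.iterate_succ_apply',
      Function.iterate_succ_apply', ih, map_add]

lemma iterD_stab (n N k : ℕ) (f : R n) (h : (⇑(D n))^[N] f = 0) :
    (⇑(D n))^[N + k] f = 0 := by
  have e : (⇑(D n))^[N + k] = (⇑(D n))^[k + N] := by rw [Nat.add_comm N k]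
  rw [e, Function.iterate_add_apply, h, iterD_zero]

lemma nilp_mul (n : ℕ) : ∀ N p q : ℕ, ∀ a b : R n, p + q = N →
    (⇑(D n))^[p] a = 0 → (⇑(D n))^[q] b = 0 → (⇑(D n))^[N] (a * b) = 0 := by
  intro N
  induction N with
  | zero =>
    intro p q a b hpq ha hb
    have hp : p = 0 := by omega
    subst hp
    simp only [Function.iterate_zero, id] at ha
    subst ha
    simp [iterD_zero]
  | succ N ih =>
    intro p q a b hpq ha hb
    rcases Nat.eq_zero_or_pos p with hp | hp
    · subst hp
      simp only [Function.iterate_zero, id] at ha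
      subst ha
      simp [iterD_zero]
    rcases Nat.eq_zero_or_pos q with hq | hq
    · subst hq
      simp only [Function.iterate_zero, id] at hb
      subst hb
      simp [iterD_zero]
    obtain ⟨p', rfl⟩ : ∃ p', p = p' + 1 := ⟨p - 1, by omega⟩
    obtain ⟨q', rfl⟩ : ∃ q', q = q' + 1 := ⟨q - 1, by omega⟩
    rw [Function.iterate_succ_apply]
    have hDab : D n (a * b) = D n a * b + a * D n b := by
      rw [Derivation.leibniz]; simp [smul_eq_mul]; ring
    rw [hDab, iterD_add]
    have h1 : (⇑(D n))^[N] (D n a * b) = 0 := by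
      apply ih p' (q' + 1) _ _ (by omega)
      · rw [← Function.iterate_succ_apply]; exact ha
      · exact hb
    have h2 : (⇑(D n))^[N] (a * D n b) = 0 := by
      apply ih (p' + 1) q' _ _ (by omega)
      · exact ha
      · rw [← Function.iterate_succ_apply]; exact hb
    rw [h1, h2, add_zero]

lemma nilp_X (n : ℕ) : ∀ m : ℕ, ∀ j : Fin (n + 1), (j : ℕ) = m →
    (⇑(D n))^[m + 1] (X j : R n) = 0 := by
  intro m
  induction m with
  | zero =>
    intro j hj
    simp only [Nat.zero_add, Function.iterate_one]
    rw [D_X, hj]; simp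
  | succ m ih =>
    intro j hj
    rw [Function.iterate_succ_apply, D_X, hj]
    simp only [Nat.succ_ne_zero, if_neg, Nat.add_sub_cancel]
    have hm : m < n + 1 := by omega
    rw [show x n m = X (⟨m, hm⟩ : Fin (n + 1)) from dif_pos hm]
    exact ih ⟨m, hm⟩ rfl

lemma nilpotent (n : ℕ) (f : R n) : ∃ N, (⇑(D n))^[N] f = 0 := by
  induction f using MvPolynomial.induction_on with
  | C a =>
    refine ⟨1, ?_⟩
    simp only [Function.iterate_one]
    have : (C a : R n) = algebraMap ℚ (R n) a := rfl
    rw [this, Derivation.map_algebraMap]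
  | add p q hp hq =>
    obtain ⟨N1, h1⟩ := hp
    obtain ⟨N2, h2⟩ := hq
    refine ⟨N1 + N2, ?_⟩
    rw [iterD_add, iterD_stab n N1 N2 p h1]
    rw [Nat.add_comm N1 N2, iterD_stab n N2 N1 q h2, add_zero]
  | mul_X p j hp =>
    obtain ⟨N1, h1⟩ := hp
    refine ⟨N1 + ((j : ℕ) + 1), ?_⟩
    exact nilp_mul n _ N1 ((j : ℕ) + 1) p (X j) rfl h1 (nilp_X n (j : ℕ) j rfl)

/-- For every `n ≥ 2` and every `f ∈ R_n`, there exist `g ∈ R_n` and `m ≥ 0` with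
`D_n(g) = x_{n,0}^m · f` (surjectivity of `D'_n` on the localization `R_n[x_{n,0}⁻¹]`). -/
theorem statement3 (n : ℕ) (hn : 2 ≤ n) (f : R n) :
    ∃ (g : R n) (m : ℕ), D n g = x n 0 ^ m * f := by
  obtain ⟨N, hN⟩ := nilpotent n f
  have hN1 : (⇑(D n))^[N + 1] f = 0 := by
    rw [Function.iterate_succ_apply', hN, map_zero]
  set A : ℕ → R n := fun k =>
    ((-1 : ℚ) ^ k * ((Nat.factorial k : ℚ))⁻¹) •
      ((x n 1) ^ k * ((x n 0) ^ (N + 1 - k) * (⇑(D n))^[k] f)) with hA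
  refine ⟨∑ k ∈ Finset.range (N + 1),
      ((-1 : ℚ) ^ k * ((Nat.factorial (k + 1) : ℚ))⁻¹) •
        ((x n 1) ^ (k + 1) * ((x n 0) ^ (N - k) * (⇑(D n))^[k] f)), N + 1, ?_⟩
  rw [map_sum]
  have key : ∀ k ∈ Finset.range (N + 1),
      D n (((-1 : ℚ) ^ k * ((Nat.factorial (k + 1) : ℚ))⁻¹) •
        ((x n 1) ^ (k + 1) * ((x n 0) ^ (N - k) * (⇑(D n))^[k] f)))
      = A k - A (k + 1) := by
    intro k hk
    rw [Finset.mem_range] at hk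
    have hkN : k ≤ N := by omega
    rw [Derivation.map_smul, Derivation.leibniz, Derivation.leibniz,
      Derivation.leibniz_pow, Derivation.leibniz_pow, D_x0, D_x1 n (by omega)]
    simp only [smul_zero, zero_smul, smul_eq_mul, mul_zero, zero_mul, zero_add, add_zero,
      Nat.add_sub_cancel]
    -- now the goal is an equation of ℚ-smul combinations
    have hNk : N + 1 - k = (N - k) + 1 := by omega
    have hNk2 : N + 1 - (k + 1) = N - k := by omega
    rw [hA]
    simp only [hNk, hNk2]
    have hfac : (Nat.factorial (k + 1) : ℚ) = (k + 1) * Nat.factorial k := by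
      rw [Nat.factorial_succ]; push_cast; ring
    have hfk : (Nat.factorial k : ℚ) ≠ 0 := Nat.cast_ne_zero.mpr (Nat.factorial_ne_zero k)
    have hk1 : ((k : ℚ) + 1) ≠ 0 := by positivity
    rw [Function.iterate_succ_apply']
    rw [pow_succ (x n 0) (N - k),
      show ((k + 1) • (x n 1 ^ k * x n 0) : R n) = ((k : ℚ) + 1) • (x n 1 ^ k * x n 0) by
        rw [← Nat.cast_smul_eq_nsmul ℚ (k + 1)]; push_cast; ring_nf]
    rw [hfac]
    rw [mul_smul_comm]
    simp only [smul_eq_C_mul]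
    have e1 : (C ((-1 : ℚ) ^ k * (((k : ℚ) + 1) * (Nat.factorial k : ℚ))⁻¹) : R n) *
        C ((k : ℚ) + 1) = C ((-1 : ℚ) ^ k * ((Nat.factorial k : ℚ))⁻¹) := by
      rw [← map_mul]
      congr 1
      field_simp
    have e2 : (C ((-1 : ℚ) ^ (k + 1) * (((k : ℚ) + 1) * (Nat.factorial k : ℚ))⁻¹) : R n) =
        - C ((-1 : ℚ) ^ k * (((k : ℚ) + 1) * (Nat.factorial k : ℚ))⁻¹) := by
      rw [← map_neg]
      congr 1
      ring
    rw [e2]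
    linear_combination (x n 0 ^ (N - k) * (⇑(D n))^[k] f * (x n 1 ^ k * x n 0)) * e1
  rw [Finset.sum_congr rfl key, Finset.sum_range_sub' A (N + 1)]
  rw [hA]
  simp only [hN1, pow_zero, one_mul, mul_zero, smul_zero, sub_zero, Nat.sub_zero,
    Nat.factorial_zero, Nat.cast_one, inv_one, mul_one, one_smul, Function.iterate_zero, id]


end
end

section
/- For every integer d ≥ 3, the variable x_{d−1,d−1} does not belong to D_∞(R_∞^{(d)}), while x_{d,0}·x_{d−1,d−1} does belong to D_∞(R_∞^{(d)}); hence the class of x_{d−1,d−1} in R_∞^{(d−1)}/D_∞(R_∞^{(d)}) is a non-trivial torsion element of this S-module. (In the paper's notation: m̄_{0,d−1} is a non-trivial torsion element of Coker(𝐃_d) ≅ H_st^‡(Λ^d H̃_ℚ).) -/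
open MvPolynomial

noncomputable section

/-- The index set `{(n,k) : 2 ≤ n, 0 ≤ k ≤ n}` of the variables `x_{n,k}` of `R_∞`. -/
abbrev Idx : Type := {p : ℕ × ℕ // 2 ≤ p.1 ∧ p.2 ≤ p.1}

/-- The polynomial ring `R_∞ = ℚ[x_{n,k} : n ≥ 2, 0 ≤ k ≤ n]`. -/
abbrev Rinf : Type := MvPolynomial Idx ℚ

/-- The variable `x_{n,k}` (and `0` for out-of-range indices, which never occur below). -/
def xv (n k : ℕ) : Rinf := if h : 2 ≤ n ∧ k ≤ n then X ⟨(n, k), h⟩ else 0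

/-- The derivation `D_∞` with `D_∞(x_{n,k}) = x_{n,k−1}` for `1 ≤ k ≤ n` and
`D_∞(x_{n,0}) = 0`. -/
def Dinf : Derivation ℚ Rinf Rinf :=
  MvPolynomial.mkDerivation ℚ fun s : Idx =>
    if s.1.2 = 0 then 0 else xv s.1.1 (s.1.2 - 1)

/-- The weight `wt(x_{n,k}) = k`. -/
def wt : Idx → ℕ := fun s => s.1.2

/-- `R_∞^{(d)}`: the `ℚ`-span of the monomials of weight `d`. -/
def W (d : ℕ) : Submodule ℚ Rinf := weightedHomogeneousSubmodule ℚ wt d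

/-!
The map `φ : R_∞ → ℚ[ε]/(ε²)` sending `x_{n,n}` to `ε` and every other variable to `0` kills
`D_∞(x_{m,k}) ∈ {0, x_{m,k-1}}` for all `m, k`, hence kills all of `D_∞(R_∞)` by the Leibniz rule,
but not `x_{n,n}`. On the other hand, a discrete integration by parts
`D(∑_j (-1)^j u_{j+1} v_{m-j}) = u_0 v_m`, valid whenever `D u_{i+1} = u_i`, `D v_{i+1} = v_i` and
`D v_0 = 0`, applied to `u_i = x_{d,i}`, `v_i = x_{d-1,i}` and `m = d - 1`, exhibits
`x_{d,0} x_{d-1,d-1}` as the image of an element of weight `d`.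
-/

theorem Derivation.map_sum_alternating_mul {R A : Type*} [CommSemiring R] [CommRing A] [Algebra R A]
    (D : Derivation R A A) (u v : ℕ → A) (m : ℕ) (hu : ∀ i ≤ m, D (u (i + 1)) = u i)
    (hv : ∀ i < m, D (v (i + 1)) = v i) (hv₀ : D (v 0) = 0) :
    D (∑ j ∈ Finset.range (m + 1), (-1) ^ j * (u (j + 1) * v (m - j))) = u 0 * v m := by
  induction m generalizing u with
  | zero => simp [hu 0 le_rfl, hv₀, mul_comm]
  | succ m ih =>
    have peel : ∑ j ∈ Finset.range (m + 2), (-1) ^ j * (u (j + 1) * v (m + 1 - j)) =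
        u 1 * v (m + 1) - ∑ j ∈ Finset.range (m + 1), (-1) ^ j * (u (j + 1 + 1) * v (m - j)) := by
      simp only [Finset.sum_range_succ' _ (m + 1), pow_succ, mul_neg, mul_one, Nat.reduceSubDiff,
        neg_mul, Finset.sum_neg_distrib, pow_zero, zero_add, tsub_zero, one_mul]
      ring
    rw [peel, map_sub, ih (fun i => u (i + 1)) (fun i hi => hu (i + 1) (by omega))
      (fun i hi => hv i (by omega)), Derivation.leibniz, hv m (by omega), hu 0 (by omega)]
    simp only [smul_eq_mul]
    ring

theorem MvPolynomial.derivation_mem_of_forall_X_mem {R σ A : Type*} [CommSemiring R]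
    [AddCommMonoid A] [Module R A] [Module (MvPolynomial σ R) A]
    [IsScalarTower R (MvPolynomial σ R) A] (D : Derivation R (MvPolynomial σ R) A)
    (N : Submodule (MvPolynomial σ R) A) (h : ∀ s, D (X s) ∈ N) (p : MvPolynomial σ R) :
    D p ∈ N := by
  induction p using MvPolynomial.induction_on with
  | C a => simp only [derivation_C, N.zero_mem]
  | add p q hp hq => simpa only [map_add] using N.add_mem hp hq
  | mul_X p s hp =>
    simpa only [Derivation.leibniz] using N.add_mem (N.smul_mem p (h s)) (N.smul_mem _ hp)

lemma xv_of_le {n k : ℕ} (hn : 2 ≤ n) (hk : k ≤ n) : xv n k = X ⟨(n, k), hn, hk⟩ :=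
  dif_pos ⟨hn, hk⟩

lemma isWeightedHomogeneous_xv (n k : ℕ) : IsWeightedHomogeneous wt (xv n k) k := by
  unfold xv
  split
  · exact isWeightedHomogeneous_X ℚ wt _
  · exact isWeightedHomogeneous_zero ℚ wt k

lemma Dinf_X (s : Idx) : Dinf (X s) = if s.1.2 = 0 then 0 else xv s.1.1 (s.1.2 - 1) :=
  mkDerivation_X _ _ _

lemma Dinf_xv_zero (n : ℕ) : Dinf (xv n 0) = 0 := by
  unfold xv
  split
  · simp [Dinf_X]
  · exact Dinf.map_zero

lemma Dinf_xv_succ {n k : ℕ} (hk : k + 1 ≤ n) : Dinf (xv n (k + 1)) = xv n k := by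
  by_cases hn : 2 ≤ n
  · simp [xv_of_le hn hk, Dinf_X]
  · simp [xv, hn]

lemma Dinf_ne_xv_self {n : ℕ} (hn : 2 ≤ n) (p : Rinf) : Dinf p ≠ xv n n := by
  let t : Idx := ⟨(n, n), hn, le_rfl⟩
  let φ : Rinf →ₐ[ℚ] DualNumber ℚ := aeval fun s => if s = t then DualNumber.eps else 0
  have hX : ∀ s, Dinf (X s) ∈ RingHom.ker φ := by
    intro s
    rw [Dinf_X]
    split_ifs with hs
    · exact Ideal.zero_mem _
    · have hst : (⟨(s.1.1, s.1.2 - 1), s.2.1, by omega⟩ : Idx) ≠ t := by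
        intro heq
        have := congrArg (fun x : Idx => x.1) heq
        simp only [Prod.mk.injEq, t] at this
        omega
      rw [xv_of_le s.2.1 (by omega), RingHom.mem_ker, aeval_X, if_neg hst]
  intro h
  have hp := derivation_mem_of_forall_X_mem Dinf _ hX p
  rw [h, xv_of_le hn le_rfl, RingHom.mem_ker, aeval_X, if_pos rfl] at hp
  simpa using congrArg TrivSqZeroExt.snd hp

/-- For every `d ≥ 3`, the variable `x_{d−1,d−1}` is not in `D_∞(R_∞^{(d)})`, while
`x_{d,0}·x_{d−1,d−1}` is: the class of `x_{d−1,d−1}` (i.e. of `m̄_{0,d−1}`) is a non-trivial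
torsion element of `R_∞^{(d−1)}/D_∞(R_∞^{(d)})`. -/
theorem statement10 (d : ℕ) (hd : 3 ≤ d) :
    xv (d - 1) (d - 1) ∉ Submodule.map Dinf.toLinearMap (W d) ∧
    xv d 0 * xv (d - 1) (d - 1) ∈ Submodule.map Dinf.toLinearMap (W d) := by
  refine ⟨fun ⟨p, _, hp⟩ => Dinf_ne_xv_self (by omega) p hp, ?_⟩
  refine ⟨∑ j ∈ Finset.range d, (-1) ^ j * (xv d (j + 1) * xv (d - 1) (d - 1 - j)), ?_, ?_⟩
  · refine Submodule.sum_mem _ fun j hj => ?_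
    have hw := ((isWeightedHomogeneous_one ℚ wt).neg.pow j).mul
      ((isWeightedHomogeneous_xv d (j + 1)).mul (isWeightedHomogeneous_xv (d - 1) (d - 1 - j)))
    rw [Finset.mem_range] at hj
    rwa [smul_zero, zero_add, show j + 1 + (d - 1 - j) = d by omega] at hw
  · obtain ⟨m, rfl⟩ : ∃ m, d = m + 1 := ⟨d - 1, by omega⟩
    exact Dinf.map_sum_alternating_mul (fun i => xv (m + 1) i) (fun i => xv m i) m
      (fun i hi => Dinf_xv_succ (by omega)) (fun i hi => Dinf_xv_succ (by omega)) (Dinf_xv_zero m)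

end
end
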